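/- arXiv:math/0606044 — 2 statements merged into one kernel-verified Lean document; each statement's English description precedes it below -/
import Mathlib

section
/- With notation as in the up operation: if λ is an e-restricted partition and U(J) ≠ ∅, then the number of nonzero parts of up(λ) equals the number of nonzero parts of λ. -/
/-- A partition: a weakly decreasing, eventually zero sequence of naturals. -/
structure BetaPartition where
  parts : ℕ → ℕ
  antitone : ∀ k, parts (k + 1) ≤ parts k
  eventually_zero : ∃ N, ∀ k, N ≤ k → parts k = 0

/-- A partition is `e`-restricted if consecutive parts differ by less than `e`. -/
def eRestricted (e : ℕ) (l : BetaPartition) : Prop :=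
  ∀ k, l.parts k < l.parts (k + 1) + e

/-- The set of beta numbers of charge `m` of a partition. -/
def betaSet (l : BetaPartition) (m : ℤ) : Set ℤ :=
  {x | ∃ k : ℕ, x = (l.parts k : ℤ) + m - k}

/-- `U(J)`: the beads that can be slid up by one on their runner. -/
def USet (e : ℕ) (J : Set ℤ) : Set ℤ :=
  {x | x ∈ J ∧ x - (e : ℤ) ∉ J}

lemma BetaPartition.parts_ne_zero_iff (l : BetaPartition) (k : ℕ) :
    l.parts k ≠ 0 ↔ k < Set.ncard {k : ℕ | l.parts k ≠ 0} := by
  obtain ⟨N, hN⟩ := l.eventually_zero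
  have hanti : Antitone l.parts := antitone_nat_of_succ_le l.antitone
  have hfin : {k : ℕ | l.parts k ≠ 0}.Finite := by
    refine Set.Finite.subset (Set.finite_Iio N) (fun x hx => ?_)
    by_contra h
    exact hx (hN x (le_of_not_gt h))
  have hlow : ∀ j k : ℕ, j ≤ k → l.parts k ≠ 0 → l.parts j ≠ 0 := by
    intro j k hjk hk h0
    exact hk (Nat.eq_zero_of_le_zero (h0 ▸ hanti hjk))
  constructor
  · intro hk
    have hsub : Set.Iic k ⊆ {k : ℕ | l.parts k ≠ 0} := fun j hj => hlow j k hj hk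
    have : (Set.Iic k).ncard ≤ Set.ncard {k : ℕ | l.parts k ≠ 0} :=
      Set.ncard_le_ncard hsub hfin
    have hIic : (Set.Iic k).ncard = k + 1 := by
      rw [← Finset.coe_Iic, Set.ncard_coe_finset, Nat.card_Iic]
    omega
  · intro hk
    by_contra h
    have hsub : {k : ℕ | l.parts k ≠ 0} ⊆ Set.Iio k := by
      intro x hx
      by_contra hxk
      exact hlow k x (le_of_not_gt hxk) hx h
    have : Set.ncard {k : ℕ | l.parts k ≠ 0} ≤ (Set.Iio k).ncard :=
      Set.ncard_le_ncard hsub (Set.finite_Iio k)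
    have hIio : (Set.Iio k).ncard = k := by
      rw [← Finset.coe_Iio, Set.ncard_coe_finset, Nat.card_Iio]
    omega

lemma mem_betaSet_of_le (l : BetaPartition) (m : ℤ) (y : ℤ)
    (hy : y ≤ m - (Set.ncard {k : ℕ | l.parts k ≠ 0} : ℤ)) : y ∈ betaSet l m := by
  set L := Set.ncard {k : ℕ | l.parts k ≠ 0} with hL
  have hnn : (0 : ℤ) ≤ m - y := by omega
  refine ⟨(m - y).toNat, ?_⟩
  have h2 : ((m - y).toNat : ℤ) = m - y := Int.toNat_of_nonneg hnn
  have h3 : l.parts (m - y).toNat = 0 := by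
    by_contra h
    have := (l.parts_ne_zero_iff _).mp h
    rw [← hL] at this
    omega
  rw [h3]
  push_cast
  omega

lemma succ_not_mem_betaSet (l : BetaPartition) (m : ℤ) :
    m - (Set.ncard {k : ℕ | l.parts k ≠ 0} : ℤ) + 1 ∉ betaSet l m := by
  set L := Set.ncard {k : ℕ | l.parts k ≠ 0} with hL
  rintro ⟨k, hk⟩
  by_cases h : l.parts k = 0
  · have hkL : ¬ (k < L) := fun hc => ((l.parts_ne_zero_iff k).mpr (hL ▸ hc)) h
    rw [h] at hk
    push_cast at hk
    omega
  · have hkL : k < L := hL ▸ (l.parts_ne_zero_iff k).mp h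
    have h1 : 1 ≤ l.parts k := Nat.one_le_iff_ne_zero.mpr h
    omega

/-- Lemma 2.3(3): the `up` operation preserves the number of nonzero parts. -/
theorem up_length (e : ℕ) (he : 2 ≤ e) (m : ℤ)
    (lam mu : BetaPartition) (hres : eRestricted e lam)
    (p q : ℤ)
    (hp : IsGreatest (USet e (betaSet lam m)) p)
    (hq : IsLeast {x : ℤ | p < x ∧ ¬ ((e : ℤ) ∣ (x - p)) ∧
      x - (e : ℤ) ∈ betaSet lam m ∧ x ∉ betaSet lam m} q)
    (hmu : betaSet mu m = (betaSet lam m \ {p}) ∪ {q}) :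
    Set.ncard {k : ℕ | mu.parts k ≠ 0} = Set.ncard {k : ℕ | lam.parts k ≠ 0} := by
  set L : ℕ := Set.ncard {k : ℕ | lam.parts k ≠ 0} with hLdef
  set L' : ℕ := Set.ncard {k : ℕ | mu.parts k ≠ 0} with hL'def
  -- p - e > m - L, hence p > m - L
  have hpe : m - (L : ℤ) < p - (e : ℤ) := by
    by_contra h
    exact hp.1.2 (mem_betaSet_of_le lam m _ (le_of_not_gt h))
  have hpL : m - (L : ℤ) < p := by
    have : (0 : ℤ) ≤ (e : ℤ) := Int.natCast_nonneg e
    omega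
  have hqp : p < q := hq.1.1
  -- mu's beta set contains everything ≤ m - L
  have hA : ∀ y : ℤ, y ≤ m - (L : ℤ) → y ∈ betaSet mu m := by
    intro y hy
    rw [hmu]
    exact Or.inl ⟨mem_betaSet_of_le lam m y hy, by
      simp only [Set.mem_singleton_iff]; omega⟩
  -- mu's beta set does not contain m - L + 1
  have hB : m - (L : ℤ) + 1 ∉ betaSet mu m := by
    rw [hmu]
    rintro (⟨hmem, -⟩ | hq')
    · exact succ_not_mem_betaSet lam m hmem
    · simp only [Set.mem_singleton_iff] at hq'
      omega
  have hA' : ∀ y : ℤ, y ≤ m - (L' : ℤ) → y ∈ betaSet mu m := mem_betaSet_of_le mu m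
  have hB' : m - (L' : ℤ) + 1 ∉ betaSet mu m := succ_not_mem_betaSet mu m
  rcases lt_trichotomy L' L with h | h | h
  · exact absurd (hA' _ (by push_cast; omega)) hB
  · exact h
  · exact absurd (hA _ (by push_cast; omega)) hB'
end

section
/- Iterating the up operation on any e-restricted partition λ terminates: there exists N such that U(up^N(J)) = ∅. The resulting partition roof(λ) = up^N(λ) is an e-core (has no removable e-hooks). -/
/-- One application of the up operation, as a relation on partitions. -/
def UpStep (e : ℕ) (m : ℤ) (l l' : BetaPartition) : Prop :=
  ∃ p q : ℤ,
    IsGreatest (USet e (betaSet l m)) p ∧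
    IsLeast {x : ℤ | p < x ∧ ¬ ((e : ℤ) ∣ (x - p)) ∧
      x - (e : ℤ) ∈ betaSet l m ∧ x ∉ betaSet l m} q ∧
    betaSet l' m = (betaSet l m \ {p}) ∪ {q}

namespace UpProof

/-- A strictly decreasing integer sequence eventually equal to `m - k`. -/
def IsBetaSeq (m : ℤ) (β : ℕ → ℤ) : Prop :=
  (∀ k, β (k + 1) < β k) ∧ ∃ K : ℕ, ∀ k, K ≤ k → β k = m - k

lemma IsBetaSeq.strictAnti {m : ℤ} {β : ℕ → ℤ} (h : IsBetaSeq m β) : StrictAnti β :=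
  strictAnti_nat_of_succ_lt h.1

lemma IsBetaSeq.le_of_le {m : ℤ} {β : ℕ → ℤ} (h : IsBetaSeq m β) {j k : ℕ} (hjk : j ≤ k) :
    β k ≤ β j := h.strictAnti.antitone hjk

lemma IsBetaSeq.add_le {m : ℤ} {β : ℕ → ℤ} (h : IsBetaSeq m β) (k j : ℕ) :
    β (k + j) + j ≤ β k := by
  induction j with
  | zero => simp
  | succ n ih =>
      have h2 : β (k + (n+1)) < β (k + n) := h.1 (k + n)
      push_cast at ih ⊢
      omega

lemma IsBetaSeq.le_sub {m : ℤ} {β : ℕ → ℤ} (h : IsBetaSeq m β) (k : ℕ) :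
    β k ≤ β 0 - k := by
  have := h.add_le 0 k
  rw [zero_add] at this
  omega

lemma IsBetaSeq.ge_m_sub {m : ℤ} {β : ℕ → ℤ} (h : IsBetaSeq m β) {K : ℕ}
    (hK : ∀ k, K ≤ k → β k = m - k) (k : ℕ) : m - k ≤ β k := by
  rcases le_or_gt K k with hk | hk
  · exact (hK k hk).ge
  · have h1 := h.add_le k (K - k)
    have h2 : β (k + (K - k)) = m - K := by
      rw [hK _ (by omega)]; congr 1; omega
    rw [h2] at h1
    omega

lemma IsBetaSeq.mem_of_le {m : ℤ} {β : ℕ → ℤ} (h : IsBetaSeq m β) {K : ℕ}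
    (hK : ∀ k, K ≤ k → β k = m - k) {x : ℤ} (hx : x ≤ m - K) : x ∈ Set.range β := by
  refine ⟨(m - x).toNat, ?_⟩
  have h1 : (K : ℤ) ≤ m - x := by omega
  rw [hK _ (by omega)]
  omega

lemma IsBetaSeq.finAbove {m : ℤ} {β : ℕ → ℤ} (h : IsBetaSeq m β) (c : ℤ) :
    (Set.range β ∩ Set.Ioi c).Finite := by
  apply Set.Finite.subset ((Set.finite_Iio ((β 0 - c).toNat + 1)).image β)
  rintro x ⟨⟨k, rfl⟩, hx⟩
  refine ⟨k, ?_, rfl⟩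
  have h1 := h.le_sub k
  have h2 : c < β k := hx
  simp only [Set.mem_Iio]
  omega

lemma IsBetaSeq.exists_partition {m : ℤ} {β : ℕ → ℤ} (h : IsBetaSeq m β) :
    ∃ l : BetaPartition, betaSet l m = Set.range β := by
  obtain ⟨K, hK⟩ := h.2
  have hge := h.ge_m_sub hK
  refine ⟨⟨fun k => (β k - m + k).toNat, ?_, K, ?_⟩, ?_⟩
  · intro k
    have h1 := h.1 k
    have h2 := hge k
    have h3 := hge (k + 1)
    push_cast
    omega
  · intro k hk
    show (β k - m + (k:ℤ)).toNat = 0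
    rw [hK k hk]
    omega
  · ext x
    simp only [betaSet, Set.mem_setOf_eq, Set.mem_range]
    constructor
    · rintro ⟨k, hk⟩
      refine ⟨k, ?_⟩
      have := hge k
      omega
    · rintro ⟨k, hk⟩
      refine ⟨k, ?_⟩
      have := hge k
      omega


lemma IsBetaSeq.surgery {m : ℤ} {β : ℕ → ℤ} (h : IsBetaSeq m β) {p q : ℤ}
    (hp : p ∈ Set.range β) (hq : q ∉ Set.range β) (hpq : p < q) :
    ∃ β' : ℕ → ℤ, IsBetaSeq m β' ∧ Set.range β' = (Set.range β \ {p}) ∪ {q} := by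
  obtain ⟨i, hi⟩ := hp
  obtain ⟨K, hK⟩ := h.2
  have hinj : Function.Injective β := h.strictAnti.injective
  have hex : ∃ k, β k < q := ⟨i, by omega⟩
  set j := Nat.find hex with hj
  have hjq : β j < q := Nat.find_spec hex
  have hlt : ∀ k, k < j → q < β k := by
    intro k hk
    have h1 : ¬ β k < q := Nat.find_min hex hk
    have h2 : β k ≠ q := fun hc => hq ⟨k, hc⟩
    omega
  have hji : j ≤ i := Nat.find_le (by omega)
  refine ⟨fun k => if k < j then β k else if k = j then q else if k ≤ i then β (k-1) else β k,
    ⟨?_, ?_⟩, ?_⟩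
  · -- strictly decreasing
    intro k
    rcases lt_trichotomy (k+1) j with h1 | h1 | h1
    · simp only [if_pos h1, if_pos (by omega : k < j)]
      exact h.1 k
    · simp only [if_neg (by omega : ¬ k + 1 < j), if_pos h1, if_pos (by omega : k < j)]
      exact hlt k (by omega)
    · -- k + 1 > j
      rcases lt_trichotomy k j with h2 | h2 | h2
      · omega
      · -- k = j
        simp only [if_neg (by omega : ¬ k + 1 < j), if_neg (by omega : k + 1 ≠ j),
          if_neg (by omega : ¬ k < j), if_pos h2]
        by_cases h3 : k + 1 ≤ i
        · rw [if_pos h3]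
          have hkk : k + 1 - 1 = k := by omega
          rw [hkk, h2]
          exact hjq
        · rw [if_neg h3]
          have hik : i = k := by omega
          have h5 := h.1 k
          rw [hik] at hi
          rw [← h2] at hjq
          omega
      · -- j < k
        simp only [if_neg (by omega : ¬ k + 1 < j), if_neg (by omega : k + 1 ≠ j),
          if_neg (by omega : ¬ k < j), if_neg (by omega : k ≠ j)]
        by_cases h3 : k + 1 ≤ i
        · rw [if_pos h3, if_pos (by omega : k ≤ i)]
          have : k - 1 < k := by omega
          exact h.strictAnti (by omega : k + 1 - 1 > k - 1)
        · rw [if_neg h3]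
          by_cases h4 : k ≤ i
          · rw [if_pos h4]
            exact h.strictAnti (by omega : k - 1 < k + 1)
          · rw [if_neg h4]
            exact h.1 k
  · -- eventually m - k
    refine ⟨max K (i+1), fun k hk => ?_⟩
    have h1 : ¬ k < j := by omega
    have h2 : k ≠ j := by omega
    have h3 : ¬ k ≤ i := by omega
    simp only [if_neg h1, if_neg h2, if_neg h3]
    exact hK k (by omega)
  · -- range equality
    ext x
    simp only [Set.mem_range, Set.mem_union, Set.mem_diff, Set.mem_singleton_iff]
    constructor
    · rintro ⟨k, rfl⟩
      by_cases h1 : k < j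
      · simp only [if_pos h1]
        left
        refine ⟨⟨k, rfl⟩, ?_⟩
        have := hlt k h1
        omega
      · by_cases h2 : k = j
        · simp only [if_neg h1, if_pos h2]
          right; trivial
        · by_cases h3 : k ≤ i
          · simp only [if_neg h1, if_neg h2, if_pos h3]
            left
            refine ⟨⟨k-1, rfl⟩, fun hc => ?_⟩
            have : k - 1 = i := hinj (hi ▸ hc)
            omega
          · simp only [if_neg h1, if_neg h2, if_neg h3]
            left
            refine ⟨⟨k, rfl⟩, fun hc => ?_⟩
            have : k = i := hinj (hi ▸ hc)
            omega
    · rintro (⟨⟨k, rfl⟩, hne⟩ | rfl)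
      · have hki : k ≠ i := fun hc => hne (hc ▸ hi)
        by_cases h1 : k < j
        · exact ⟨k, by simp only [if_pos h1]⟩
        · by_cases h2 : k < i
          · refine ⟨k+1, ?_⟩
            simp only [if_neg (by omega : ¬ k + 1 < j), if_neg (by omega : k + 1 ≠ j),
              if_pos (by omega : k + 1 ≤ i)]
            congr 1
          · refine ⟨k, ?_⟩
            have h4 : ¬ k ≤ i := by omega
            have h5 : k ≠ j := by omega
            simp only [if_neg h1, if_neg h5, if_neg h4]
      · exact ⟨j, by simp⟩


/-- `J` is the beta set of some partition at charge `m`. -/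
def Nice (m : ℤ) (J : Set ℤ) : Prop := ∃ β : ℕ → ℤ, IsBetaSeq m β ∧ J = Set.range β

/-- Gaps between consecutive beta numbers are at most `e`. -/
def DenseE (e : ℕ) (J : Set ℤ) : Prop :=
  ∀ t : ℤ, (∃ y ∈ J, t < y) → ∃ y ∈ J, t < y ∧ y ≤ t + e

lemma isBetaSeq_of_partition (l : BetaPartition) (m : ℤ) :
    IsBetaSeq m (fun k => (l.parts k : ℤ) + m - k) := by
  constructor
  · intro k
    have := l.antitone k
    push_cast
    omega
  · obtain ⟨N, hN⟩ := l.eventually_zero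
    refine ⟨N, fun k hk => ?_⟩
    show ((l.parts k : ℤ)) + m - k = m - k
    rw [hN k hk]
    simp

lemma betaSet_eq_range (l : BetaPartition) (m : ℤ) :
    betaSet l m = Set.range (fun k => (l.parts k : ℤ) + m - k) := by
  ext x
  simp only [betaSet, Set.mem_setOf_eq, Set.mem_range]
  exact ⟨fun ⟨k, h⟩ => ⟨k, h.symm⟩, fun ⟨k, h⟩ => ⟨k, h.symm⟩⟩

lemma nice_betaSet (l : BetaPartition) (m : ℤ) : Nice m (betaSet l m) :=
  ⟨_, isBetaSeq_of_partition l m, betaSet_eq_range l m⟩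

lemma Nice.lo {m : ℤ} {J : Set ℤ} (h : Nice m J) : ∃ a : ℤ, ∀ x : ℤ, x ≤ a → x ∈ J := by
  obtain ⟨β, hβ, rfl⟩ := h
  obtain ⟨K, hK⟩ := hβ.2
  exact ⟨m - K, fun x hx => hβ.mem_of_le hK hx⟩

lemma Nice.hi {m : ℤ} {J : Set ℤ} (h : Nice m J) : ∃ M : ℤ, ∀ x ∈ J, x ≤ M := by
  obtain ⟨β, hβ, rfl⟩ := h
  exact ⟨β 0, by rintro x ⟨k, rfl⟩; exact hβ.le_of_le (Nat.zero_le k)⟩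

lemma Nice.finAbove {m : ℤ} {J : Set ℤ} (h : Nice m J) (c : ℤ) : (J ∩ Set.Ioi c).Finite := by
  obtain ⟨β, hβ, rfl⟩ := h
  exact hβ.finAbove c

lemma Nice.fin_USet {m : ℤ} {J : Set ℤ} (e : ℕ) (h : Nice m J) : (USet e J).Finite := by
  obtain ⟨a, ha⟩ := h.lo
  apply (h.finAbove a).subset
  rintro x ⟨hx1, hx2⟩
  refine ⟨hx1, ?_⟩
  simp only [Set.mem_Ioi]
  by_contra hc
  exact hx2 (ha _ (by omega))

lemma Nice.exists_partition {m : ℤ} {J : Set ℤ} (h : Nice m J) :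
    ∃ l : BetaPartition, betaSet l m = J := by
  obtain ⟨β, hβ, rfl⟩ := h
  exact hβ.exists_partition

lemma Nice.surgery {m : ℤ} {J : Set ℤ} (h : Nice m J) {p q : ℤ}
    (hp : p ∈ J) (hq : q ∉ J) (hpq : p < q) :
    ∃ l' : BetaPartition, betaSet l' m = (J \ {p}) ∪ {q} := by
  obtain ⟨β, hβ, rfl⟩ := h
  obtain ⟨β', hβ', hrange⟩ := hβ.surgery hp hq hpq
  obtain ⟨l', hl'⟩ := hβ'.exists_partition
  exact ⟨l', by rw [hl', hrange]⟩

lemma dense_of_restricted {e : ℕ} {m : ℤ} {l : BetaPartition} (hres : eRestricted e l) :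
    DenseE e (betaSet l m) := by
  rw [betaSet_eq_range]
  set β := fun k => (l.parts k : ℤ) + m - k with hβdef
  have hβ : IsBetaSeq m β := isBetaSeq_of_partition l m
  have hgap : ∀ k, β k ≤ β (k + 1) + e := by
    intro k
    have := hres k
    simp only [hβdef]
    push_cast
    omega
  intro t ⟨y, ⟨k0, hk0⟩, hty⟩
  obtain ⟨K, hK⟩ := hβ.2
  have hex : ∃ k, β k ≤ t := by
    refine ⟨K + (m - t).toNat, ?_⟩
    have h8 : β (K + (m - t).toNat) = m - ((K + (m - t).toNat : ℕ) : ℤ) := hK _ (by omega)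
    rw [h8]
    push_cast
    omega
  set k1 := Nat.find hex with hk1
  have hk1t : β k1 ≤ t := Nat.find_spec hex
  have hk1pos : k1 ≠ 0 := by
    intro hc
    have h0 : β 0 ≤ t := hc ▸ hk1t
    have h9 : β k0 ≤ β 0 := hβ.le_of_le (Nat.zero_le k0)
    omega
  have hprev : ¬ β (k1 - 1) ≤ t := Nat.find_min hex (by omega)
  refine ⟨β (k1 - 1), ⟨k1 - 1, rfl⟩, by omega, ?_⟩
  have := hgap (k1 - 1)
  have hkk : k1 - 1 + 1 = k1 := by omega
  rw [hkk] at this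
  omega

lemma not_dvd_of_between {e : ℕ} {d : ℤ} (h1 : 0 < d) (h2 : d < e) : ¬ ((e : ℤ) ∣ d) :=
  fun h => absurd (Int.le_of_dvd h1 h) (by omega)

lemma exists_p {e : ℕ} {m : ℤ} {J : Set ℤ} (hn : Nice m J) (hne : (USet e J).Nonempty) :
    ∃ p, IsGreatest (USet e J) p := by
  obtain ⟨M, hM⟩ := hn.hi
  obtain ⟨p, hp1, hp2⟩ := Int.exists_greatest_of_bdd
    (P := fun z => z ∈ USet e J) ⟨M, fun z hz => hM z hz.1⟩ hne
  exact ⟨p, hp1, hp2⟩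

/-- The set from which `q` is chosen. -/
def QSet (e : ℕ) (J : Set ℤ) (p : ℤ) : Set ℤ :=
  {x : ℤ | p < x ∧ ¬ ((e : ℤ) ∣ (x - p)) ∧ x - (e : ℤ) ∈ J ∧ x ∉ J}

lemma exists_b0 {e : ℕ} {m : ℤ} {J : Set ℤ} (he : 2 ≤ e) (hn : Nice m J) (hd : DenseE e J)
    {p : ℤ} (hp : p ∈ J) (hpe : p - e ∉ J) :
    ∃ b ∈ J, p - e < b ∧ b < p ∧ ¬ ((e : ℤ) ∣ (b + e - p)) := by
  have he' : (2 : ℤ) ≤ (e : ℤ) := by exact_mod_cast he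
  obtain ⟨y, hy, hy1, hy2⟩ := hd (p - e - 1) ⟨p, hp, by omega⟩
  have hyne : y ≠ p - e := fun hc => hpe (hc ▸ hy)
  have hylt : y < p := by
    rcases lt_or_ge y p with h | h
    · exact h
    · exfalso
      omega
  refine ⟨y, hy, by omega, hylt, not_dvd_of_between (by omega) (by omega)⟩

lemma exists_q {e : ℕ} {m : ℤ} {J : Set ℤ} (he : 2 ≤ e) (hn : Nice m J) (hd : DenseE e J)
    {p : ℤ} (hp : p ∈ J) (hpe : p - e ∉ J) :
    ∃ q, IsLeast (QSet e J p) q := by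
  have he' : (2 : ℤ) ≤ (e : ℤ) := by exact_mod_cast he
  obtain ⟨M, hM⟩ := hn.hi
  obtain ⟨b0, hb0J, hb0l, hb0u, hb0d⟩ := exists_b0 he hn hd hp hpe
  have hnonempty : ∃ x, x ∈ QSet e J p := by
    by_contra hQ
    push_neg at hQ
    have hstep : ∀ x : ℤ, p < x → ¬ ((e : ℤ) ∣ (x - p)) → x - e ∈ J → x ∈ J := by
      intro x h1 h2 h3
      by_contra h4
      exact hQ x ⟨h1, h2, h3, h4⟩
    have hclimb : ∀ n : ℕ, b0 + e + n * e ∈ J := by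
      intro n
      induction n with
      | zero =>
          simp only [Nat.cast_zero, zero_mul, add_zero]
          exact hstep _ (by omega) hb0d (by simpa using hb0J)
      | succ n ih =>
          have hsub : b0 + e + ((n : ℤ) + 1) * e - e = b0 + e + n * e := by ring
          have hdvd : ¬ ((e : ℤ) ∣ (b0 + e + ((n : ℤ) + 1) * e - p)) := by
            intro hdd
            apply hb0d
            have h5 : (e : ℤ) ∣ ((n : ℤ) + 1) * e := dvd_mul_left _ _
            have h6 := hdd.sub h5
            have h7 : b0 + e + ((n : ℤ) + 1) * e - p - ((n : ℤ) + 1) * e = b0 + e - p := by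
              ring
            rwa [h7] at h6
          have hgt : p < b0 + e + ((n : ℤ) + 1) * e := by nlinarith
          have h10 := hstep _ hgt hdvd (hsub ▸ ih)
          have hcast : b0 + (e : ℤ) + ((n + 1 : ℕ) : ℤ) * e = b0 + e + ((n : ℤ) + 1) * e := by
            push_cast
            ring
          rw [hcast]
          exact h10
    set n := (M - b0).toNat + 1 with hn'
    have hmem := hclimb n
    have hle := hM _ hmem
    have hne : (n : ℤ) ≤ (n : ℤ) * e := le_mul_of_one_le_right (Int.natCast_nonneg n) (by omega)
    have : (n : ℤ) = (M - b0).toNat + 1 := by exact_mod_cast rfl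
    omega
  exact Int.exists_least_of_bdd ⟨p, fun z hz => le_of_lt hz.1⟩ hnonempty


lemma qpe_notmem {e : ℕ} {J : Set ℤ} {p q : ℤ} (hgp : IsGreatest (USet e J) p)
    (hq : q ∉ J) (hpq : p < q) : q + e ∉ J := by
  intro hc
  have hmem : q + (e : ℤ) ∈ USet e J := ⟨hc, by rwa [show q + (e:ℤ) - e = q by ring]⟩
  have := hgp.2 hmem
  omega

lemma USet_update {e : ℕ} (he : 2 ≤ e) {J : Set ℤ} {p q : ℤ}
    (hp : p ∈ J) (hq : q ∉ J) (hqe : q - (e:ℤ) ∈ J) (hqpe : q + (e:ℤ) ∉ J) (hpq : p < q)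
    (hqd : ¬ ((e : ℤ) ∣ (q - p))) :
    USet e ((J \ {p}) ∪ {q}) =
      {x | (x ∈ USet e J ∧ x ≠ p) ∨ (x = p + e ∧ p + (e:ℤ) ∈ J)} := by
  have he' : (2 : ℤ) ≤ (e : ℤ) := by exact_mod_cast he
  have hqep : q - (e:ℤ) ≠ p := fun hc => hqd ⟨1, by omega⟩
  ext x
  simp only [USet, Set.mem_setOf_eq, Set.mem_union, Set.mem_diff, Set.mem_singleton_iff]
  constructor
  · rintro ⟨hx1, hx2⟩
    rcases hx1 with ⟨hxJ, hxp⟩ | rfl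
    · by_cases hxep : x - (e:ℤ) = p
      · right
        exact ⟨by omega, by rwa [show p + (e:ℤ) = x by omega]⟩
      · left
        exact ⟨⟨hxJ, fun hc => hx2 (Or.inl ⟨hc, hxep⟩)⟩, hxp⟩
    · exact absurd (Or.inl ⟨hqe, hqep⟩) hx2
  · rintro (⟨⟨hxJ, hxe⟩, hxp⟩ | ⟨rfl, hpeJ⟩)
    · refine ⟨Or.inl ⟨hxJ, hxp⟩, ?_⟩
      rintro (⟨hc, -⟩ | hc)
      · exact hxe hc
      · apply hqpe
        rw [show q + (e:ℤ) = x by omega]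
        exact hxJ
    · refine ⟨Or.inl ⟨hpeJ, by omega⟩, ?_⟩
      rintro (⟨-, hc⟩ | hc)
      · exact hc (by ring)
      · omega

lemma dense_update {e : ℕ} {m : ℤ} (he : 2 ≤ e) {J : Set ℤ} {p q : ℤ}
    (hn : Nice m J) (hd : DenseE e J) (hp : p ∈ J) (hpe : p - (e:ℤ) ∉ J)
    (hlq : IsLeast (QSet e J p) q) :
    DenseE e ((J \ {p}) ∪ {q}) := by
  have he' : (2 : ℤ) ≤ (e : ℤ) := by exact_mod_cast he
  obtain ⟨⟨hq1, hq2, hq3, hq4⟩, hqmin⟩ := hlq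
  rintro t ⟨y', hy', hty'⟩
  by_cases h1 : ∃ y ∈ J, y ≠ p ∧ t < y ∧ y ≤ t + e
  · obtain ⟨y, hy, hyp, h, h'⟩ := h1
    exact ⟨y, Or.inl ⟨hy, hyp⟩, h, h'⟩
  by_cases h2 : t < q ∧ q ≤ t + e
  · exact ⟨q, Or.inr rfl, h2.1, h2.2⟩
  exfalso
  push_neg at h1 h2
  by_cases h3 : ∃ y ∈ J, t < y
  · obtain ⟨y0, hy0, hty0, hy0e⟩ := hd t h3
    have hy0p : y0 = p := by
      by_contra hc
      have := h1 y0 hy0 hc hty0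
      omega
    have htp : t < p := hy0p ▸ hty0
    have hpt : p ≤ t + (e:ℤ) := hy0p ▸ hy0e
    obtain ⟨b0, hb0J, hb0l, hb0u, hb0d⟩ := exists_b0 he hn hd hp hpe
    have hb0t : b0 ≤ t := by
      by_contra hc
      have := h1 b0 hb0J (by omega) (by omega)
      omega
    have hxQ : b0 + (e:ℤ) ∈ QSet e J p := by
      refine ⟨by omega, ?_, by simpa using hb0J, ?_⟩
      · rwa [show b0 + (e:ℤ) - p = b0 + e - p by ring]
      · intro hc
        have := h1 (b0 + e) hc (by omega) (by omega)
        omega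
    have hqle := hqmin hxQ
    have := h2 (by omega)
    omega
  · push_neg at h3
    have hy'q : y' = q := by
      rcases hy' with ⟨hyJ, -⟩ | h
      · exact absurd hty' (not_lt.mpr (h3 _ hyJ))
      · exact h
    have htq : t < q := hy'q ▸ hty'
    have hqet : q - (e:ℤ) ≤ t := h3 _ hq3
    have := h2 htq
    omega

lemma step_lemma {e : ℕ} {m : ℤ} (he : 2 ≤ e) {J : Set ℤ} {p : ℤ}
    (hn : Nice m J) (hd : DenseE e J) (hgp : IsGreatest (USet e J) p) :
    ∃ (l' : BetaPartition) (q : ℤ),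
      IsLeast (QSet e J p) q ∧
      betaSet l' m = (J \ {p}) ∪ {q} ∧
      DenseE e ((J \ {p}) ∪ {q}) ∧
      ((USet e ((J \ {p}) ∪ {q})).ncard < (USet e J).ncard ∨
        ((USet e ((J \ {p}) ∪ {q})).ncard = (USet e J).ncard ∧
         IsGreatest (USet e ((J \ {p}) ∪ {q})) (p + e) ∧
         (((J \ {p}) ∪ {q}) ∩ Set.Ioi (p + (e:ℤ))).ncard < (J ∩ Set.Ioi p).ncard)) := by
  have he' : (2 : ℤ) ≤ (e : ℤ) := by exact_mod_cast he
  have hp : p ∈ J := hgp.1.1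
  have hpe : p - (e:ℤ) ∉ J := hgp.1.2
  obtain ⟨q, hlq⟩ := exists_q he hn hd hp hpe
  obtain ⟨⟨hq1, hq2, hq3, hq4⟩, hqmin⟩ := hlq
  have hqpe : q + (e:ℤ) ∉ J := qpe_notmem hgp hq4 hq1
  obtain ⟨l', hl'⟩ := hn.surgery hp hq4 hq1
  have hU' := USet_update he hp hq4 hq3 hqpe hq1 hq2
  have hUfin : (USet e J).Finite := hn.fin_USet e
  have hqnepe : q ≠ p + e := fun hc => hq2 ⟨1, by omega⟩
  refine ⟨l', q, ⟨⟨hq1, hq2, hq3, hq4⟩, hqmin⟩, hl', dense_update he hn hd hp hpe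
    ⟨⟨hq1, hq2, hq3, hq4⟩, hqmin⟩, ?_⟩
  by_cases hpeJ : p + (e:ℤ) ∈ J
  · -- case B : cardinality stays the same, max U increases to p + e
    right
    have hpeU : p + (e:ℤ) ∉ USet e J := fun hc => hc.2 (by rwa [show p + (e:ℤ) - e = p by ring])
    have hUeq : USet e (J \ {p} ∪ {q}) = insert (p + (e:ℤ)) (USet e J \ {p}) := by
      rw [hU']
      ext x
      simp only [Set.mem_setOf_eq, Set.mem_insert_iff, Set.mem_diff, Set.mem_singleton_iff]
      constructor
      · rintro (⟨h1, h2⟩ | ⟨h1, -⟩)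
        · exact Or.inr ⟨h1, h2⟩
        · exact Or.inl h1
      · rintro (rfl | ⟨h1, h2⟩)
        · exact Or.inr ⟨rfl, hpeJ⟩
        · exact Or.inl ⟨h1, h2⟩
    have hcard : (USet e (J \ {p} ∪ {q})).ncard = (USet e J).ncard := by
      rw [hUeq, Set.ncard_insert_of_notMem (fun hc => hpeU hc.1) hUfin.diff,
        Set.ncard_diff_singleton_add_one hgp.1 hUfin]
    have hgp' : IsGreatest (USet e (J \ {p} ∪ {q})) (p + (e:ℤ)) := by
      constructor
      · rw [hU']
        exact Or.inr ⟨rfl, hpeJ⟩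
      · intro x hx
        rw [hU'] at hx
        rcases hx with ⟨h1, -⟩ | ⟨rfl, -⟩
        · have := hgp.2 h1
          omega
        · exact le_refl _
    refine ⟨hcard, hgp', ?_⟩
    have hAfin : (J ∩ Set.Ioi p).Finite := hn.finAbove p
    have hXfin : (J ∩ Set.Ioi (p + (e:ℤ))).Finite := hn.finAbove _
    rcases lt_or_gt_of_ne hqnepe with hqlt | hqgt
    · -- q < p + e : strict subset argument
      apply Set.ncard_lt_ncard _ hAfin
      constructor
      · rintro x ⟨hx1, hx2⟩
        simp only [Set.mem_Ioi] at hx2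
        rcases hx1 with ⟨hxJ, -⟩ | rfl
        · exact ⟨hxJ, by simp only [Set.mem_Ioi]; omega⟩
        · omega
      · intro hsub
        have hmem : p + (e:ℤ) ∈ J ∩ Set.Ioi p := ⟨hpeJ, by simp only [Set.mem_Ioi]; omega⟩
        have := hsub hmem
        rcases this with ⟨-, h⟩
        simp only [Set.mem_Ioi] at h
        omega
    · -- q > p + e : need a second bead in (p, p+e]
      obtain ⟨b0, hb0J, hb0l, hb0u, hb0d⟩ := exists_b0 he hn hd hp hpe
      have hb1J : b0 + (e:ℤ) ∈ J := by
        by_contra hc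
        have hQ : b0 + (e:ℤ) ∈ QSet e J p := by
          refine ⟨by omega, ?_, by simpa using hb0J, hc⟩
          rwa [show b0 + (e:ℤ) - p = b0 + e - p by ring]
        have := hqmin hQ
        omega
      have hA'eq : (J \ {p} ∪ {q}) ∩ Set.Ioi (p + (e:ℤ)) = insert q (J ∩ Set.Ioi (p + (e:ℤ))) := by
        ext x
        simp only [Set.mem_inter_iff, Set.mem_union, Set.mem_diff,
          Set.mem_singleton_iff, Set.mem_insert_iff, Set.mem_Ioi]
        constructor
        · rintro ⟨⟨hxJ, -⟩ | rfl, hx2⟩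
          · exact Or.inr ⟨hxJ, hx2⟩
          · exact Or.inl rfl
        · rintro (rfl | ⟨hxJ, hx2⟩)
          · exact ⟨Or.inr rfl, hqgt⟩
          · exact ⟨Or.inl ⟨hxJ, by omega⟩, hx2⟩
      have hsub2 : insert (p + (e:ℤ)) (insert (b0 + (e:ℤ)) (J ∩ Set.Ioi (p + (e:ℤ)))) ⊆
          J ∩ Set.Ioi p := by
        rintro x (rfl | rfl | ⟨hxJ, hx2⟩)
        · exact ⟨hpeJ, by simp only [Set.mem_Ioi]; omega⟩
        · exact ⟨hb1J, by simp only [Set.mem_Ioi]; omega⟩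
        · simp only [Set.mem_Ioi] at hx2
          exact ⟨hxJ, by simp only [Set.mem_Ioi]; omega⟩
      have hc1 : ((J \ {p} ∪ {q}) ∩ Set.Ioi (p + (e:ℤ))).ncard =
          (J ∩ Set.Ioi (p + (e:ℤ))).ncard + 1 := by
        rw [hA'eq, Set.ncard_insert_of_notMem (fun hc => hq4 hc.1) hXfin]
      have hc2 : (insert (p + (e:ℤ)) (insert (b0 + (e:ℤ)) (J ∩ Set.Ioi (p + (e:ℤ))))).ncard =
          (J ∩ Set.Ioi (p + (e:ℤ))).ncard + 2 := by
        rw [Set.ncard_insert_of_notMem ?h1 ((hXfin.insert _)),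
          Set.ncard_insert_of_notMem ?h2 hXfin]
        case h1 =>
          rintro (hc | ⟨-, hc⟩)
          · omega
          · simp only [Set.mem_Ioi] at hc
            omega
        case h2 =>
          rintro ⟨-, hc⟩
          simp only [Set.mem_Ioi] at hc
          omega
      have hc3 := Set.ncard_le_ncard hsub2 hAfin
      omega
  · -- case A : cardinality drops
    left
    have hUeq : USet e (J \ {p} ∪ {q}) = USet e J \ {p} := by
      rw [hU']
      ext x
      simp only [Set.mem_setOf_eq, Set.mem_diff, Set.mem_singleton_iff]
      constructor
      · rintro (⟨h1, h2⟩ | ⟨-, h⟩)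
        · exact ⟨h1, h2⟩
        · exact absurd h hpeJ
      · rintro ⟨h1, h2⟩
        exact Or.inl ⟨h1, h2⟩
    rw [hUeq]
    exact Set.ncard_diff_singleton_lt_of_mem hgp.1 hUfin


/-- The goal: any partition representing `J` admits a terminating chain of up steps. -/
def Chain (e : ℕ) (m : ℤ) (J : Set ℤ) : Prop :=
  ∀ l : BetaPartition, betaSet l m = J →
    ∃ (N : ℕ) (f : ℕ → BetaPartition), f 0 = l ∧
      (∀ k < N, UpStep e m (f k) (f (k + 1))) ∧
      USet e (betaSet (f N) m) = ∅ ∧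
      (∀ x ∈ betaSet (f N) m, x - (e : ℤ) ∈ betaSet (f N) m)

lemma chain_cons {e : ℕ} {m : ℤ} {l l' : BetaPartition} (hstep : UpStep e m l l')
    (h : ∃ (N : ℕ) (f : ℕ → BetaPartition), f 0 = l' ∧
      (∀ k < N, UpStep e m (f k) (f (k + 1))) ∧
      USet e (betaSet (f N) m) = ∅ ∧
      (∀ x ∈ betaSet (f N) m, x - (e : ℤ) ∈ betaSet (f N) m)) :
    ∃ (N : ℕ) (f : ℕ → BetaPartition), f 0 = l ∧
      (∀ k < N, UpStep e m (f k) (f (k + 1))) ∧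
      USet e (betaSet (f N) m) = ∅ ∧
      (∀ x ∈ betaSet (f N) m, x - (e : ℤ) ∈ betaSet (f N) m) := by
  obtain ⟨N, f, hf0, hfs, hfin1, hfin2⟩ := h
  refine ⟨N + 1, fun k => if k = 0 then l else f (k - 1), by simp, ?_, ?_, ?_⟩
  · intro k hk
    match k with
    | 0 =>
        simp only [if_pos rfl, if_neg (by omega : (1:ℕ) ≠ 0)]
        have h1 : (1:ℕ) - 1 = 0 := rfl
        rw [h1, hf0]
        exact hstep
    | (j+1) =>
        simp only [if_neg (by omega : j + 1 ≠ 0), if_neg (by omega : j + 2 ≠ 0)]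
        have h1 : j + 1 - 1 = j := rfl
        have h2 : j + 2 - 1 = j + 1 := rfl
        rw [h1, h2]
        exact hfs j (by omega)
  · simp only [if_neg (by omega : N + 1 ≠ 0)]
    have h1 : N + 1 - 1 = N := rfl
    rw [h1]
    exact hfin1
  · simp only [if_neg (by omega : N + 1 ≠ 0)]
    have h1 : N + 1 - 1 = N := rfl
    rw [h1]
    exact hfin2

lemma chain_of_empty {e : ℕ} {m : ℤ} {J : Set ℤ} (hU : USet e J = ∅) : Chain e m J := by
  intro l hl
  refine ⟨0, fun _ => l, rfl, fun k hk => absurd hk (Nat.not_lt_zero k), by rw [hl]; exact hU, ?_⟩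
  intro x hx
  by_contra hc
  have hmem : x ∈ USet e (betaSet l m) := ⟨hx, hc⟩
  rw [hl, hU] at hmem
  exact hmem

lemma chain_all {e : ℕ} {m : ℤ} (he : 2 ≤ e) :
    ∀ n : ℕ, ∀ J : Set ℤ, Nice m J → DenseE e J → (USet e J).ncard ≤ n → Chain e m J := by
  intro n
  induction n using Nat.strong_induction_on with
  | _ n IHn =>
  have inner : ∀ k : ℕ, ∀ (J : Set ℤ) (p : ℤ), Nice m J → DenseE e J →
      IsGreatest (USet e J) p → (USet e J).ncard ≤ n → (J ∩ Set.Ioi p).ncard ≤ k →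
      Chain e m J := by
    intro k
    induction k using Nat.strong_induction_on with
    | _ k IHk =>
    intro J p hn hd hgp hcard hpsi l hl
    obtain ⟨l', q, hlq, hl'beta, hd', hmeas⟩ := step_lemma he hn hd hgp
    have hn2 : Nice m (J \ {p} ∪ {q}) := hl'beta ▸ nice_betaSet l' m
    have hstep : UpStep e m l l' := by
      refine ⟨p, q, ?_, ?_, ?_⟩
      · rw [hl]; exact hgp
      · rw [hl]; exact hlq
      · rw [hl]; exact hl'beta
    have hUpos : 0 < (USet e J).ncard := (Set.ncard_pos (hn.fin_USet e)).mpr ⟨p, hgp.1⟩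
    have hchain2 : Chain e m (J \ {p} ∪ {q}) := by
      rcases hmeas with hlt | ⟨heqc, hgp', hpsi'⟩
      · exact IHn (n - 1) (by omega) _ hn2 hd' (by omega)
      · exact IHk ((J \ {p} ∪ {q}) ∩ Set.Ioi (p + (e:ℤ))).ncard (by omega) _ (p + (e:ℤ))
          hn2 hd' hgp' (by omega) le_rfl
    exact chain_cons hstep (hchain2 l' hl'beta)
  intro J hn hd hcard l hl
  by_cases hU : USet e J = ∅
  · exact chain_of_empty hU l hl
  · obtain ⟨p, hgp⟩ := exists_p hn (Set.nonempty_iff_ne_empty.mpr hU)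
    exact inner (J ∩ Set.Ioi p).ncard J p hn hd hgp hcard le_rfl l hl

end UpProof

/-- Iterating the up operation terminates: from any `e`-restricted partition
there is a finite chain of up steps reaching a partition with `U(J) = ∅`,
which is an `e`-core (every bead has the bead above it on its runner). -/
theorem up_terminates_in_core (e : ℕ) (he : 2 ≤ e) (m : ℤ)
    (lam : BetaPartition) (hres : eRestricted e lam) :
    ∃ (N : ℕ) (f : ℕ → BetaPartition), f 0 = lam ∧
      (∀ k < N, UpStep e m (f k) (f (k + 1))) ∧
      USet e (betaSet (f N) m) = ∅ ∧
      (∀ x ∈ betaSet (f N) m, x - (e : ℤ) ∈ betaSet (f N) m) := UpProof.chain_all he ((USet e (betaSet lam m)).ncard) (betaSet lam m)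
    (UpProof.nice_betaSet lam m) (UpProof.dense_of_restricted hres) le_rfl lam rfl
end
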